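/- Let μ be a finitely supported generating probability measure on I. Then the support of the harmonic measure ν_ε is the whole of ∂I; equivalently, ν_ε(U) > 0 for every nonempty open subset U ⊆ ∂I. -/

import Mathlib

/-!
Let `L` bound the lengths of the words charged by `μ`. A step of the walk deletes at most `L`
letters at the end of the current word before appending new ones, so for `|s| > L` the kernel
factors as `p(x s, x s') = p̃(s, s') · dim_q(x s') / dim_q(x s)` with `p̃` independent of the
prefix `x`. Along paths that keep more than `L` letters after a fixed prefix `x`, the walk is
therefore the Doob transform of `p̃` by `s ↦ dim_q(x s)`, and since
`dim_q(s) ≤ dim_q(x s) ≤ (1 + q⁻¹)^|x| dim_q(s)`, the walks from `t` and from `x t` stay in this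
region with comparable probabilities. The walk from `ε` escapes to infinity, so for some `t` the
walk from `t` stays longer than `L` for ever with positive probability; then the walk from `x t`
keeps the prefix `x` for ever with positive probability. By irreducibility the walk from `ε`
reaches `x t`, so its limit lies in the cylinder of `x` with positive probability, and every
nonempty open subset of `∂I` contains such a cylinder.
-/

open Filter Topology MeasureTheory

/-- Words in the free monoid on two letters `α = true`, `β = false`. -/
abbrev Word := List Bool

/-- Conjugation: reverse the word and swap the two letters. -/
def wconj (x : Word) : Word := x.reverse.map (fun b => !b)

/-- Fusion multiplicity `m(z; x, y)`: the number of triples `(x₀, w, y₀)` with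
`x = x₀w`, `y = w̄y₀` and `z = x₀y₀`. -/
def fm (x y z : Word) : ℕ :=
  ((Finset.range (x.length + 1)).filter (fun k =>
    wconj (x.drop k) <+: y ∧ z = x.take k ++ y.drop (x.length - k))).card

/-- Maximal alternating blocks of a word. -/
def blocks : Word → List Word
  | [] => []
  | a :: rest =>
    match blocks rest with
    | [] => [[a]]
    | b :: bs => if b.head? = some a then [a] :: b :: bs else (a :: b) :: bs

/-- The quantum integer `[n]_q = (qⁿ - q⁻ⁿ)/(q - q⁻¹)`. -/
noncomputable def qnum (q : ℝ) (n : ℕ) : ℝ := (q ^ n - q⁻¹ ^ n) / (q - q⁻¹)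

/-- Quantum dimension `dim_q(x) = ∏ᵢ [|xᵢ|+1]_q` over the maximal alternating blocks. -/
noncomputable def dimq (q : ℝ) (x : Word) : ℝ :=
  ((blocks x).map (fun b => qnum q (b.length + 1))).prod

/-- Classical dimension `dim₁(x) = ∏ᵢ (|xᵢ|+1)` over the maximal alternating blocks. -/
def dim1 (x : Word) : ℕ := ((blocks x).map (fun b => b.length + 1)).prod
/-- The transition kernel of the random walk on `I` associated with a probability
measure `μ`: `p(x,y) = Σ_z μ(z)·m(z; x̄, y)·dim_q(y)/(dim_q(x)·dim_q(z))`. -/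
noncomputable def pker (q : ℝ) (μ : Word → ℝ) (x y : Word) : ℝ :=
  ∑ᶠ z : Word, μ z * (fm (wconj x) y z : ℝ) * dimq q y / (dimq q x * dimq q z)

/-- The `n`-step transition probabilities: `p₁ = p` and
`p_{n+1}(x,y) = Σ_u p_n(x,u)·p(u,y)`.  (The value at `n = 0` is irrelevant.) -/
noncomputable def pn (q : ℝ) (μ : Word → ℝ) : ℕ → Word → Word → ℝ
  | 0, _, _ => 0
  | 1, x, y => pker q μ x y
  | n + 2, x, y => ∑' u : Word, pn q μ (n + 1) x u * pker q μ u y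
/-- The word `[w]_n` formed by the first `n` letters of an infinite word `w ∈ ∂I`. -/
def bprefix (w : ℕ → Bool) (n : ℕ) : Word := (List.range n).map w

/-- `D_w(x, y) = lim_n dim_q(x[w]_n)/dim_q(y[w]_n)` for `x, y ∈ I` and `w ∈ ∂I`. -/
noncomputable def Dw (q : ℝ) (x y : Word) (w : ℕ → Bool) : ℝ :=
  limUnder atTop (fun n => dimq q (x ++ bprefix w n) / dimq q (y ++ bprefix w n))

/-- Concatenation of a finite word with an infinite word. -/
def bcat (z : Word) (u : ℕ → Bool) : ℕ → Bool :=
  fun n => if n < z.length then z.getD n false else u (n - z.length)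

/-- The strictly alternating infinite word starting with the letter `a`. -/
def walt (a : Bool) : ℕ → Bool := fun n => if n % 2 = 0 then a else !a

/-- `(x|w)`: the length of the longest common prefix of a finite word `x` and an
infinite word `w`. -/
def cpb : Word → (ℕ → Bool) → ℕ
  | [], _ => 0
  | a :: xs, w => if a = w 0 then cpb xs (fun n => w (n + 1)) + 1 else 0
/-- Discrete σ-algebra on the countable set of words. -/
instance : MeasurableSpace Word := ⊤


section QuantumDimension

variable {q : ℝ}

lemma qnum_one (hq : q - q⁻¹ ≠ 0) : qnum q 1 = 1 := by
  simp [qnum, hq]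

lemma qnum_succ (hq : q - q⁻¹ ≠ 0) (n : ℕ) : qnum q (n + 1) = q⁻¹ * qnum q n + q ^ n := by
  unfold qnum
  rw [mul_div_assoc', div_add' _ _ _ hq]
  ring

/-- Prepending a letter either opens a new block `[a]` or lengthens the first block by one. -/
lemma exists_dimq_cons (hq : q - q⁻¹ ≠ 0) (a : Bool) (w : Word) :
    ∃ n r, 1 ≤ n ∧ dimq q (a :: w) = qnum q (n + 1) * r ∧ dimq q w = qnum q n * r := by
  rcases hb : blocks w with _ | ⟨b, bs⟩
  · exact ⟨1, 1, le_rfl, by simp [dimq, blocks, hb], by simp [dimq, hb, qnum_one hq]⟩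
  · by_cases ha : b.head? = some a
    · refine ⟨1, dimq q w, le_rfl, ?_, by rw [qnum_one hq, one_mul]⟩
      simp [dimq, blocks, hb, ha]
    · refine ⟨b.length + 1, (bs.map fun c => qnum q (c.length + 1)).prod, by omega, ?_, ?_⟩
      · simp [dimq, blocks, hb, ha]
      · simp [dimq, hb]

lemma sub_inv_ne_zero_of_lt_one (hq0 : 0 < q) (hq1 : q < 1) : q - q⁻¹ ≠ 0 := by
  have : 1 < q⁻¹ := (one_lt_inv₀ hq0).2 hq1
  linarith

lemma one_le_qnum (hq0 : 0 < q) (hq1 : q < 1) {n : ℕ} (hn : 1 ≤ n) : 1 ≤ qnum q n := by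
  have hq := sub_inv_ne_zero_of_lt_one hq0 hq1
  have hinv : 1 ≤ q⁻¹ := (one_le_inv₀ hq0).2 hq1.le
  induction n, hn using Nat.le_induction with
  | base => rw [qnum_one hq]
  | succ n _ ih =>
    rw [qnum_succ hq]
    nlinarith [pow_pos hq0 n]

lemma qnum_le_qnum_succ (hq0 : 0 < q) (hq1 : q < 1) {n : ℕ} (hn : 1 ≤ n) :
    qnum q n ≤ qnum q (n + 1) := by
  have hinv : 1 ≤ q⁻¹ := (one_le_inv₀ hq0).2 hq1.le
  rw [qnum_succ (sub_inv_ne_zero_of_lt_one hq0 hq1)]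
  nlinarith [pow_pos hq0 n, one_le_qnum hq0 hq1 hn]

lemma qnum_succ_le (hq0 : 0 < q) (hq1 : q < 1) {n : ℕ} (hn : 1 ≤ n) :
    qnum q (n + 1) ≤ (1 + q⁻¹) * qnum q n := by
  rw [qnum_succ (sub_inv_ne_zero_of_lt_one hq0 hq1)]
  nlinarith [pow_le_one₀ hq0.le hq1.le (n := n), one_le_qnum hq0 hq1 hn]

lemma dimq_pos (hq0 : 0 < q) (hq1 : q < 1) (w : Word) : 0 < dimq q w :=
  List.prod_pos fun _ hb => by
    obtain ⟨b, -, rfl⟩ := List.mem_map.1 hb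
    linarith [one_le_qnum hq0 hq1 (Nat.le_add_left 1 b.length)]

lemma dimq_le_dimq_cons (hq0 : 0 < q) (hq1 : q < 1) (a : Bool) (w : Word) :
    dimq q w ≤ dimq q (a :: w) ∧ dimq q (a :: w) ≤ (1 + q⁻¹) * dimq q w := by
  obtain ⟨n, r, hn, hcons, hw⟩ := exists_dimq_cons (sub_inv_ne_zero_of_lt_one hq0 hq1) a w
  have hr : 0 < r :=
    (mul_pos_iff_of_pos_left (by linarith [one_le_qnum hq0 hq1 hn])).1 (hw ▸ dimq_pos hq0 hq1 w)
  rw [hcons, hw]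
  exact ⟨by gcongr; exact qnum_le_qnum_succ hq0 hq1 hn,
    by rw [← mul_assoc]; gcongr; exact qnum_succ_le hq0 hq1 hn⟩

lemma dimq_le_dimq_append (hq0 : 0 < q) (hq1 : q < 1) (x s : Word) :
    dimq q s ≤ dimq q (x ++ s) := by
  induction x with
  | nil => rfl
  | cons a x ih => exact ih.trans (dimq_le_dimq_cons hq0 hq1 a _).1

lemma dimq_append_le (hq0 : 0 < q) (hq1 : q < 1) (x s : Word) :
    dimq q (x ++ s) ≤ (1 + q⁻¹) ^ x.length * dimq q s := by
  induction x with
  | nil => simp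
  | cons a x ih =>
    calc dimq q (a :: (x ++ s)) ≤ (1 + q⁻¹) * dimq q (x ++ s) := (dimq_le_dimq_cons hq0 hq1 a _).2
      _ ≤ (1 + q⁻¹) * ((1 + q⁻¹) ^ x.length * dimq q s) := by gcongr
      _ = (1 + q⁻¹) ^ (a :: x).length * dimq q s := by rw [List.length_cons, pow_succ']; ring

end QuantumDimension

lemma wconj_append (a b : Word) : wconj (a ++ b) = wconj b ++ wconj a := by
  simp [wconj]

lemma wconj_wconj (x : Word) : wconj (wconj x) = x := by
  simp [wconj, Function.comp_def]

@[simp] lemma length_wconj (x : Word) : (wconj x).length = x.length := by simp [wconj]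

lemma fm_wconj_append (x t s Z : Word) (hZ : Z.length ≤ t.length) :
    fm (wconj (x ++ t)) (x ++ s) Z = fm (wconj t) s Z := by
  unfold fm
  congr 1
  ext k
  simp only [Finset.mem_filter, Finset.mem_range, wconj_append, List.length_append, length_wconj]
  by_cases hk : k ≤ t.length
  · have hdrop : (wconj t ++ wconj x).drop k = (wconj t).drop k ++ wconj x :=
      List.drop_append_of_le_length (by simpa using hk)
    have htake : (wconj t ++ wconj x).take k = (wconj t).take k :=
      List.take_append_of_le_length (by simpa using hk)
    have hdrop' : (x ++ s).drop (t.length + x.length - k) = s.drop (t.length - k) := by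
      rw [show t.length + x.length - k = x.length + (t.length - k) by omega,
        List.drop_length_add_append]
    rw [hdrop, htake, hdrop', wconj_append, wconj_wconj, List.prefix_append_right_inj]
    exact and_congr_left fun _ => ⟨fun _ => by omega, fun _ => by omega⟩
  · refine iff_of_false (fun ⟨_, _, hZk⟩ => hk ?_) (by omega)
    have := congrArg List.length hZk
    simp only [List.length_append, List.length_take, List.length_drop, length_wconj] at this
    omega

section PathSpace

variable {α : Type*}

def shiftPath (n : ℕ) (ω : ℕ → α) : ℕ → α := fun i => ω (i + n)

lemma preimage_shiftPath_preimage_shiftPath (m n : ℕ) (A : Set (ℕ → α)) :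
    shiftPath n ⁻¹' (shiftPath m ⁻¹' A) = shiftPath (m + n) ⁻¹' A := by
  ext ω
  show (fun i => ω (i + m + n)) ∈ A ↔ (fun i => ω (i + (m + n))) ∈ A
  simp only [add_assoc]

def staysIn (S : Set α) (N : ℕ) : Set (ℕ → α) := {ω | ∀ n ≤ N, ω n ∈ S}

def initialCylinders : Set (Set (ℕ → α)) :=
  Set.range fun p : ℕ × (ℕ → α) => {ω | ∀ i ≤ p.1, ω i = p.2 i}

lemma isPiSystem_initialCylinders : IsPiSystem (initialCylinders (α := α)) := by
  rintro _ ⟨⟨n, w⟩, rfl⟩ _ ⟨⟨n', w'⟩, rfl⟩ hne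
  wlog h : n ≤ n' generalizing n n' w w'
  · rw [Set.inter_comm]
    exact this n' w' n w (Set.inter_comm _ _ ▸ hne) (by omega)
  obtain ⟨ω, hω, hω'⟩ := hne
  refine ⟨⟨n', w'⟩, Set.ext fun ω' => ⟨fun h' => ⟨fun i hi => ?_, h'⟩, fun h' => h'.2⟩⟩
  rw [h' i (hi.trans h), ← hω' i (hi.trans h), hω i hi]

variable [MeasurableSpace α]

lemma measurable_shiftPath (n : ℕ) : Measurable (shiftPath (α := α) n) :=
  measurable_pi_lambda _ fun i => measurable_pi_apply (i + n)

variable [MeasurableSingletonClass α]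

lemma measurableSet_cylinder (n : ℕ) (w : ℕ → α) :
    MeasurableSet {ω : ℕ → α | ∀ i ≤ n, ω i = w i} := by
  have : {ω : ℕ → α | ∀ i ≤ n, ω i = w i} = (Set.Iic n).pi fun i => {w i} := by
    ext ω; simp
  rw [this]
  exact MeasurableSet.pi (Set.to_countable _) fun _ _ => measurableSet_singleton _

variable [Countable α]

lemma generateFrom_initialCylinders :
    MeasurableSpace.generateFrom initialCylinders =
      (MeasurableSpace.pi : MeasurableSpace (ℕ → α)) := by
  refine le_antisymm (MeasurableSpace.generateFrom_le ?_) ?_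
  · rintro _ ⟨⟨n, w⟩, rfl⟩
    exact measurableSet_cylinder n w
  · refine iSup_le fun n => measurable_iff_comap_le.1 ?_
    -- the first `n + 1` coordinates take countably many values, with cylinders as fibres
    have hrestr : Measurable[MeasurableSpace.generateFrom initialCylinders]
        (fun ω : ℕ → α => fun j : Fin (n + 1) => ω j) := by
      refine @measurable_to_countable' _ _ _ _ (MeasurableSpace.generateFrom _) _ fun v =>
        MeasurableSpace.measurableSet_generateFrom ⟨⟨n, fun j => v ⟨min j n, by omega⟩⟩, ?_⟩
      ext ω
      simp only [Set.mem_ofPred_eq, Set.mem_preimage, Set.mem_singleton_iff, funext_iff]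
      exact ⟨fun h j => by simpa [Nat.min_eq_left (Nat.lt_succ_iff.1 j.2)] using h j (by omega),
        fun h i hi => by simpa [Nat.min_eq_left hi] using h ⟨i, by omega⟩⟩
    exact (measurable_pi_apply (Fin.last n)).comp hrestr

lemma measurableSet_forall_mem (S : Set α) : MeasurableSet {ω : ℕ → α | ∀ n, ω n ∈ S} := by
  rw [Set.ofPred_forall]
  exact MeasurableSet.iInter fun n => measurable_pi_apply n S.to_countable.measurableSet

lemma measurableSet_staysIn (S : Set α) (N : ℕ) : MeasurableSet (staysIn S N) := by
  have : staysIn S N = (Set.Iic N).pi fun _ => S := by ext; simp [staysIn]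
  rw [this]
  exact MeasurableSet.pi (Set.to_countable _) fun _ _ => S.to_countable.measurableSet

lemma tendsto_measure_staysIn (ν : Measure (ℕ → α)) [IsFiniteMeasure ν] (S : Set α) :
    Tendsto (fun N => ν (staysIn S N)) atTop (𝓝 (ν {ω | ∀ n, ω n ∈ S})) := by
  have hinter : ⋂ N, staysIn S N = {ω | ∀ n, ω n ∈ S} :=
    Set.ext fun ω => ⟨fun h n => Set.mem_iInter.1 h n n le_rfl,
      fun h => Set.mem_iInter.2 fun _ n _ => h n⟩
  rw [← hinter]
  exact tendsto_measure_iInter_atTop (fun N => (measurableSet_staysIn S N).nullMeasurableSet)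
    (fun _ _ hNM _ h n hn => h n (hn.trans hNM)) ⟨0, measure_ne_top _ _⟩

end PathSpace

section MarkovFamily

variable {α : Type*} [MeasurableSpace α]

def IsMarkovFamily (k : α → α → ℝ) (P : α → Measure (ℕ → α)) : Prop :=
  ∀ (x : α) (w : ℕ → α), w 0 = x → ∀ n : ℕ,
    P x {ω | ∀ i ≤ n, ω i = w i} = ENNReal.ofReal (∏ i ∈ Finset.range n, k (w i) (w (i + 1)))

namespace IsMarkovFamily

variable [MeasurableSingletonClass α] {k : α → α → ℝ} {P : α → Measure (ℕ → α)}
  [∀ x, IsProbabilityMeasure (P x)]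

lemma ae_zero_eq (hM : IsMarkovFamily k P) (x : α) : ∀ᵐ ω ∂P x, ω 0 = x := by
  have hmeas : MeasurableSet {ω : ℕ → α | ω 0 = x} :=
    (measurableSet_singleton x).preimage (measurable_pi_apply 0)
  refine (ae_iff_measure_eq hmeas.nullMeasurableSet).2 ?_
  simpa using hM x (fun _ => x) rfl 0

lemma measure_inter_shiftPath_cylinder (hM : IsMarkovFamily k P) (hk : ∀ x y, 0 ≤ k x y)
    (x : α) (w : ℕ → α) (n : ℕ) :
    P x ({ω | ω 1 = w 0} ∩ shiftPath 1 ⁻¹' {ω | ∀ i ≤ n, ω i = w i}) =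
      ENNReal.ofReal (k x (w 0)) * P (w 0) {ω | ∀ i ≤ n, ω i = w i} := by
  set w' : ℕ → α := fun i => if i = 0 then x else w (i - 1)
  have hae : ({ω | ω 1 = w 0} ∩ shiftPath 1 ⁻¹' {ω | ∀ i ≤ n, ω i = w i} : Set (ℕ → α))
      =ᵐ[P x] {ω | ∀ i ≤ n + 1, ω i = w' i} := by
    filter_upwards [hM.ae_zero_eq x] with ω h0
    refine propext ?_
    change (ω 1 = w 0 ∧ ∀ i ≤ n, ω (i + 1) = w i) ↔ ∀ i ≤ n + 1, ω i = w' i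
    refine ⟨fun ⟨_, h⟩ i hi => ?_, fun h => ?_⟩
    · rcases i with _ | i
      · simp [w', h0]
      · simpa [w'] using h i (by omega)
    · have h' : ∀ i ≤ n, ω (i + 1) = w i := fun i hi => by simpa [w'] using h (i + 1) (by omega)
      exact ⟨h' 0 (Nat.zero_le n), h'⟩
  rw [measure_congr hae, hM x w' rfl, hM (w 0) w rfl, Finset.prod_range_succ',
    mul_comm, ENNReal.ofReal_mul (hk _ _)]
  simp [w']

lemma measure_staysIn_of_notMem (hM : IsMarkovFamily k P) {S : Set α} {x : α} (hx : x ∉ S)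
    (N : ℕ) : P x (staysIn S N) = 0 := by
  refine measure_eq_zero_iff_ae_notMem.2 ?_
  filter_upwards [hM.ae_zero_eq x] with ω h0 hω
  exact hx (h0 ▸ hω 0 (Nat.zero_le N))

variable [Countable α]

lemma measure_inter_shiftPath (hM : IsMarkovFamily k P) (hk : ∀ x y, 0 ≤ k x y) (x y : α)
    {A : Set (ℕ → α)} (hA : MeasurableSet A) :
    P x ({ω | ω 1 = y} ∩ shiftPath 1 ⁻¹' A) = ENNReal.ofReal (k x y) * P y A := by
  have hy : MeasurableSet {ω : ℕ → α | ω 1 = y} :=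
    (measurableSet_singleton y).preimage (measurable_pi_apply 1)
  have hmap : ((P x).restrict {ω | ω 1 = y}).map (shiftPath 1) = ENNReal.ofReal (k x y) • P y := by
    refine ext_of_generate_finite _ generateFrom_initialCylinders.symm
      isPiSystem_initialCylinders ?_ ?_
    · rintro _ ⟨⟨n, w⟩, rfl⟩
      rw [Measure.map_apply (measurable_shiftPath 1) (measurableSet_cylinder n w),
        Measure.restrict_apply' hy, Set.inter_comm, Measure.smul_apply, smul_eq_mul]
      by_cases hw : w 0 = y
      · subst hw
        exact hM.measure_inter_shiftPath_cylinder hk x w n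
      · have hempty : {ω : ℕ → α | ω 1 = y} ∩ shiftPath 1 ⁻¹' {ω | ∀ i ≤ n, ω i = w i} = ∅ :=
          Set.eq_empty_of_forall_notMem fun ω ⟨h1, hω⟩ =>
            hw ((hω 0 (Nat.zero_le n)).symm.trans h1)
        have hnull : P y {ω | ∀ i ≤ n, ω i = w i} = 0 := by
          refine measure_eq_zero_iff_ae_notMem.2 ?_
          filter_upwards [hM.ae_zero_eq y] with ω h0 hω
          exact hw ((hω 0 (Nat.zero_le n)).symm.trans h0)
        rw [hempty, measure_empty, hnull, mul_zero]
    · have h := hM.measure_inter_shiftPath_cylinder hk x (fun _ => y) 0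
      rw [hM y (fun _ => y) rfl 0] at h
      simpa [Measure.map_apply (measurable_shiftPath 1) MeasurableSet.univ, shiftPath] using h
  simpa [Measure.map_apply (measurable_shiftPath 1) hA, Measure.restrict_apply' hy,
    Set.inter_comm] using congrArg (· A) hmap

lemma measure_preimage_shiftPath_one (hM : IsMarkovFamily k P) (hk : ∀ x y, 0 ≤ k x y) (x : α)
    {A : Set (ℕ → α)} (hA : MeasurableSet A) :
    P x (shiftPath 1 ⁻¹' A) = ∑' y, ENNReal.ofReal (k x y) * P y A := by
  have hunion : shiftPath 1 ⁻¹' A = ⋃ y, {ω | ω 1 = y} ∩ shiftPath 1 ⁻¹' A := by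
    ext ω; simp
  rw [hunion, measure_iUnion]
  · exact tsum_congr fun y => hM.measure_inter_shiftPath hk x y hA
  · exact fun y y' hyy' => Set.disjoint_left.2 fun ω h h' => hyy' (h.1.symm.trans h'.1)
  · exact fun y => ((measurableSet_singleton y).preimage (measurable_pi_apply 1)).inter
      (hA.preimage (measurable_shiftPath 1))

lemma exists_measure_ne_zero_of_shiftPath (hM : IsMarkovFamily k P) (hk : ∀ x y, 0 ≤ k x y)
    {A : Set (ℕ → α)} (hA : MeasurableSet A) {x : α} {N : ℕ}
    (h : P x (shiftPath N ⁻¹' A) ≠ 0) : ∃ y, P y A ≠ 0 := by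
  induction N generalizing x with
  | zero => exact ⟨x, h⟩
  | succ N ih =>
    rw [← preimage_shiftPath_preimage_shiftPath N 1,
      hM.measure_preimage_shiftPath_one hk x (hA.preimage (measurable_shiftPath N))] at h
    obtain ⟨y, hy⟩ := not_forall.1 (mt ENNReal.tsum_eq_zero.2 h)
    exact ih (right_ne_zero_of_mul hy)

lemma exists_measure_forall_mem_ne_zero (hM : IsMarkovFamily k P) (hk : ∀ x y, 0 ≤ k x y)
    {S : Set α} {x : α} (h : ∀ᵐ ω ∂P x, ∀ᶠ n in atTop, ω n ∈ S) :
    ∃ y, P y {ω | ∀ n, ω n ∈ S} ≠ 0 := by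
  have hcover : ∀ᵐ ω ∂P x, ω ∈ ⋃ N, shiftPath N ⁻¹' {ω | ∀ n, ω n ∈ S} := by
    filter_upwards [h] with ω hω
    obtain ⟨N, hN⟩ := hω.exists_forall_of_atTop
    exact Set.mem_iUnion.2 ⟨N, fun n => hN _ (Nat.le_add_left N n)⟩
  obtain ⟨N, hN⟩ : ∃ N, P x (shiftPath N ⁻¹' {ω | ∀ n, ω n ∈ S}) ≠ 0 := by
    by_contra! h0
    obtain ⟨ω, hω, hω'⟩ :=
      (hcover.and (measure_eq_zero_iff_ae_notMem.1 (measure_iUnion_null h0))).exists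
    exact hω' hω
  exact hM.exists_measure_ne_zero_of_shiftPath hk (measurableSet_forall_mem S) hN

lemma measure_staysIn_zero (hM : IsMarkovFamily k P) {S : Set α} {x : α} (hx : x ∈ S) :
    P x (staysIn S 0) = 1 := by
  rw [← prob_compl_eq_zero_iff (measurableSet_staysIn S 0), measure_eq_zero_iff_ae_notMem]
  filter_upwards [hM.ae_zero_eq x] with ω h0
  simp [staysIn, h0, hx]

lemma measure_staysIn_succ (hM : IsMarkovFamily k P) (hk : ∀ x y, 0 ≤ k x y) {S : Set α}
    {x : α} (hx : x ∈ S) (N : ℕ) :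
    P x (staysIn S (N + 1)) = ∑' y, ENNReal.ofReal (k x y) * P y (staysIn S N) := by
  rw [← hM.measure_preimage_shiftPath_one hk x (measurableSet_staysIn S N)]
  refine measure_congr ?_
  filter_upwards [hM.ae_zero_eq x] with ω h0
  refine propext ⟨fun h n hn => h (n + 1) (by omega), fun h n hn => ?_⟩
  rcases n with _ | n
  · exact h0 ▸ hx
  · exact h n (by omega)

end IsMarkovFamily

end MarkovFamily
section RandomWalk

variable {q : ℝ} {μ : Word → ℝ}

lemma pker_nonneg (hq0 : 0 < q) (hq1 : q < 1) (hμ0 : ∀ z, 0 ≤ μ z) (x y : Word) :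
    0 ≤ pker q μ x y :=
  finsum_nonneg fun z => by
    have := dimq_pos hq0 hq1 x; have := dimq_pos hq0 hq1 y; have := dimq_pos hq0 hq1 z
    have := hμ0 z
    positivity

noncomputable def pkerRed (q : ℝ) (μ : Word → ℝ) (s s' : Word) : ℝ :=
  ∑ᶠ z : Word, μ z * (fm (wconj s) s' z : ℝ) / dimq q z

lemma pkerRed_nonneg (hq0 : 0 < q) (hq1 : q < 1) (hμ0 : ∀ z, 0 ≤ μ z) (s s' : Word) :
    0 ≤ pkerRed q μ s s' :=
  finsum_nonneg fun z => by
    have := dimq_pos hq0 hq1 z; have := hμ0 z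
    positivity

lemma pker_append_mul_dimq (hq0 : 0 < q) (hq1 : q < 1) {s : Word}
    (hs : ∀ z, μ z ≠ 0 → z.length ≤ s.length) (x s' : Word) :
    pker q μ (x ++ s) (x ++ s') * dimq q (x ++ s) = pkerRed q μ s s' * dimq q (x ++ s') := by
  have hx := (dimq_pos hq0 hq1 (x ++ s)).ne'
  unfold pker pkerRed
  rw [finsum_mul, finsum_mul]
  refine finsum_congr fun z => ?_
  by_cases hz : μ z = 0
  · simp [hz]
  · rw [fm_wconj_append x s s' z (hs z hz)]
    field_simp

def longExtensions (x : Word) (L : ℕ) : Set Word := (x ++ ·) '' {s | L < s.length}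

lemma append_mem_longExtensions {x s : Word} {L : ℕ} :
    x ++ s ∈ longExtensions x L ↔ L < s.length := by
  simp [longExtensions]

lemma longExtensions_nil (L : ℕ) : longExtensions [] L = {s | L < s.length} := by
  simp [longExtensions]

lemma take_eq_of_mem_longExtensions {x v : Word} {L : ℕ} (hv : v ∈ longExtensions x L) :
    v.take x.length = x := by
  obtain ⟨s, -, rfl⟩ := hv
  simp

variable {P : Word → Measure (ℕ → Word)} [∀ x, IsProbabilityMeasure (P x)]

lemma measure_staysIn_succ_mul_dimq (hq0 : 0 < q) (hq1 : q < 1) (hμ0 : ∀ z, 0 ≤ μ z)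
    (hM : IsMarkovFamily (pker q μ) P) {L : ℕ} (hL : ∀ z, μ z ≠ 0 → z.length ≤ L)
    (x : Word) {s : Word} (hs : L < s.length) (N : ℕ) :
    P (x ++ s) (staysIn (longExtensions x L) (N + 1)) * ENNReal.ofReal (dimq q (x ++ s)) =
      ∑' s', ENNReal.ofReal (pkerRed q μ s s') *
        (P (x ++ s') (staysIn (longExtensions x L) N) * ENNReal.ofReal (dimq q (x ++ s'))) := by
  have hk := pker_nonneg hq0 hq1 hμ0
  rw [hM.measure_staysIn_succ hk (append_mem_longExtensions.2 hs), ← ENNReal.tsum_mul_right,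
    ← (List.append_right_injective x).tsum_eq]
  · refine tsum_congr fun s' => ?_
    rw [mul_right_comm, ← ENNReal.ofReal_mul (hk _ _),
      pker_append_mul_dimq hq0 hq1 (fun z hz => (hL z hz).trans hs.le),
      ENNReal.ofReal_mul (pkerRed_nonneg hq0 hq1 hμ0 s s'), mul_assoc, mul_comm (P _ _)]
  · intro v hv
    by_contra hvx
    have : v ∉ longExtensions x L := fun ⟨s', _, h⟩ => hvx ⟨s', h⟩
    exact hv (by simp only [hM.measure_staysIn_of_notMem this N, mul_zero, zero_mul])

lemma measure_staysIn_mul_dimq_le (hq0 : 0 < q) (hq1 : q < 1) (hμ0 : ∀ z, 0 ≤ μ z)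
    (hM : IsMarkovFamily (pker q μ) P) {L : ℕ} (hL : ∀ z, μ z ≠ 0 → z.length ≤ L)
    {x z : Word} {c : ℝ} (hdim : ∀ s, dimq q (z ++ s) ≤ c * dimq q (x ++ s)) (N : ℕ) (s : Word) :
    P (z ++ s) (staysIn (longExtensions z L) N) * ENNReal.ofReal (dimq q (z ++ s)) ≤
      ENNReal.ofReal c *
        (P (x ++ s) (staysIn (longExtensions x L) N) * ENNReal.ofReal (dimq q (x ++ s))) := by
  have hshort : ∀ N s, ¬ L < s.length → P (z ++ s) (staysIn (longExtensions z L) N) = 0 :=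
    fun N s hs => hM.measure_staysIn_of_notMem (mt append_mem_longExtensions.1 hs) N
  induction N generalizing s with
  | zero =>
    by_cases hs : L < s.length
    swap
    · simp [hshort 0 s hs]
    have hc : 0 ≤ c := nonneg_of_mul_nonneg_left ((dimq_pos hq0 hq1 _).le.trans (hdim s))
      (dimq_pos hq0 hq1 _)
    rw [hM.measure_staysIn_zero (append_mem_longExtensions.2 hs),
      hM.measure_staysIn_zero (append_mem_longExtensions.2 hs), one_mul, one_mul,
      ← ENNReal.ofReal_mul hc]
    exact ENNReal.ofReal_le_ofReal (hdim s)
  | succ N ih =>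
    by_cases hs : L < s.length
    swap
    · simp [hshort (N + 1) s hs]
    rw [measure_staysIn_succ_mul_dimq hq0 hq1 hμ0 hM hL z hs,
      measure_staysIn_succ_mul_dimq hq0 hq1 hμ0 hM hL x hs, ← ENNReal.tsum_mul_left]
    refine ENNReal.tsum_le_tsum fun s' => ?_
    rw [mul_left_comm (ENNReal.ofReal c)]
    exact mul_le_mul_of_nonneg_left (ih s') zero_le

lemma measure_forall_mem_longExtensions_le (hq0 : 0 < q) (hq1 : q < 1) (hμ0 : ∀ z, 0 ≤ μ z)
    (hM : IsMarkovFamily (pker q μ) P) {L : ℕ} (hL : ∀ z, μ z ≠ 0 → z.length ≤ L) (x t : Word) :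
    P t {ω | ∀ n, ω n ∈ longExtensions [] L} ≤
      ENNReal.ofReal ((1 + q⁻¹) ^ x.length) * P (x ++ t) {ω | ∀ n, ω n ∈ longExtensions x L} := by
  set C := (1 + q⁻¹) ^ x.length
  have hdt := dimq_pos hq0 hq1 t
  refine ge_of_tendsto (ENNReal.Tendsto.const_mul (tendsto_measure_staysIn _ _)
    (Or.inr ENNReal.ofReal_ne_top))
    (Eventually.of_forall fun N => ?_)
  have h := measure_staysIn_mul_dimq_le hq0 hq1 hμ0 hM hL (z := []) (x := x) (c := 1)
    (fun s => (dimq_le_dimq_append hq0 hq1 x s).trans_eq (one_mul _).symm) N t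
  rw [List.nil_append, ENNReal.ofReal_one, one_mul] at h
  have hd : ENNReal.ofReal (dimq q (x ++ t)) ≤ ENNReal.ofReal C * ENNReal.ofReal (dimq q t) := by
    rw [← ENNReal.ofReal_mul (by positivity)]
    exact ENNReal.ofReal_le_ofReal (dimq_append_le hq0 hq1 x t)
  set px := P (x ++ t) (staysIn (longExtensions x L) N)
  rw [← ENNReal.mul_le_mul_iff_left (ENNReal.ofReal_pos.2 hdt).ne' ENNReal.ofReal_ne_top]
  calc P t {ω | ∀ n, ω n ∈ longExtensions [] L} * ENNReal.ofReal (dimq q t)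
      ≤ P t (staysIn (longExtensions [] L) N) * ENNReal.ofReal (dimq q t) := by
        gcongr
        exact fun ω h n _ => h n
    _ ≤ px * ENNReal.ofReal (dimq q (x ++ t)) := h
    _ ≤ px * (ENNReal.ofReal C * ENNReal.ofReal (dimq q t)) := by gcongr
    _ = ENNReal.ofReal C * px * ENNReal.ofReal (dimq q t) := by ring

lemma measure_preimage_shiftPath_ne_zero_of_pn_ne_zero (hq0 : 0 < q) (hq1 : q < 1)
    (hμ0 : ∀ z, 0 ≤ μ z) (hM : IsMarkovFamily (pker q μ) P) {A : Set (ℕ → Word)}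
    (hA : MeasurableSet A) {a b : Word} (hb : P b A ≠ 0) {n : ℕ} (hn : 1 ≤ n)
    (hab : pn q μ n a b ≠ 0) : P a (shiftPath n ⁻¹' A) ≠ 0 := by
  have hk := pker_nonneg hq0 hq1 hμ0
  have hstep : ∀ {u v : Word} {B : Set (ℕ → Word)}, MeasurableSet B → P v B ≠ 0 →
      pker q μ u v ≠ 0 → P u (shiftPath 1 ⁻¹' B) ≠ 0 := by
    intro u v B hB hvB huv
    have hpos : 0 < P u ({ω | ω 1 = v} ∩ shiftPath 1 ⁻¹' B) := by
      rw [hM.measure_inter_shiftPath hk u v hB]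
      exact pos_iff_ne_zero.2 (mul_ne_zero (ENNReal.ofReal_pos.2 ((hk u v).lt_of_ne' huv)).ne' hvB)
    exact (hpos.trans_le (measure_mono Set.inter_subset_right)).ne'
  obtain ⟨n, rfl⟩ := Nat.exists_eq_add_of_le' hn
  induction n generalizing b A with
  | zero => exact hstep hA hb hab
  | succ n ih =>
    obtain ⟨u, hu⟩ : ∃ u, pn q μ (n + 1) a u * pker q μ u b ≠ 0 := by
      by_contra! h
      exact hab (by simp [pn, h])
    rw [add_comm (n + 1) 1, ← preimage_shiftPath_preimage_shiftPath 1 (n + 1)]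
    exact ih (hA.preimage (measurable_shiftPath 1)) (hstep hA hb (right_ne_zero_of_mul hu))
      (by omega) (left_ne_zero_of_mul hu)

end RandomWalk

lemma exists_pi_Iio_subset_of_isOpen {β : Type*} [TopologicalSpace β] {U : Set (ℕ → β)}
    (hU : IsOpen U) {w : ℕ → β} (hw : w ∈ U) : ∃ m, (Set.Iio m).pi (fun i => {w i}) ⊆ U := by
  obtain ⟨I, o, ho, hIU⟩ := isOpen_pi_iff.1 hU w hw
  refine ⟨I.sup id + 1, fun u hu => hIU fun i hi => ?_⟩
  rw [show u i = w i from hu i (Nat.lt_succ_of_le (I.le_sup (f := id) hi))]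
  exact (ho i hi).2

lemma bprefix_eq_bprefix_iff {u w : ℕ → Bool} {m : ℕ} :
    bprefix u m = bprefix w m ↔ ∀ i < m, u i = w i := by
  simp [bprefix, List.map_inj_left]

@[simp] lemma length_bprefix (w : ℕ → Bool) (m : ℕ) : (bprefix w m).length = m := by
  simp [bprefix]

lemma eq_of_eventually_take_eq {ω : ℕ → Word} {x y : Word} {L n : ℕ}
    (hy : ∀ᶠ j in atTop, (ω j).take x.length = y) (hx : ∀ i, ω (i + n) ∈ longExtensions x L) :
    y = x := by
  obtain ⟨J, hJ⟩ := hy.exists_forall_of_atTop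
  rw [← hJ (J + n) (Nat.le_add_right J n), take_eq_of_mem_longExtensions (hx J)]

theorem harmonic_measure_full_support_general
    (q : ℝ) (hq0 : 0 < q) (hq1 : q < 1)
    (μ : Word → ℝ) (hμ0 : ∀ z, 0 ≤ μ z)
    (hfin : {z : Word | μ z ≠ 0}.Finite)
    (hgen : ∀ x y : Word, ∃ n : ℕ, 1 ≤ n ∧ 0 < pn q μ n x y)
    (P : Word → Measure (ℕ → Word)) (hP : ∀ x, IsProbabilityMeasure (P x))
    (hmarkov : ∀ (x : Word) (w : ℕ → Word), w 0 = x → ∀ n : ℕ,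
      P x {ω | ∀ i ≤ n, ω i = w i} =
        ENNReal.ofReal (∏ i ∈ Finset.range n, pker q μ (w i) (w (i + 1))))
    (bnd : (ℕ → Word) → (ℕ → Bool)) (hbnd_meas : Measurable bnd)
    (hbnd : ∀ x : Word, ∀ᵐ ω ∂(P x),
      Tendsto (fun n => (ω n).length) atTop atTop ∧
      ∀ m : ℕ, ∀ᶠ n in atTop, (ω n).take m = bprefix (bnd ω) m)
    (ν : Word → Measure (ℕ → Bool)) (hν : ∀ x, ν x = (P x).map bnd)
    :
    ∀ U : Set (ℕ → Bool), IsOpen U → U.Nonempty → 0 < ν [] U := by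
  intro U hU ⟨w, hw⟩
  obtain ⟨m, hmU⟩ := exists_pi_Iio_subset_of_isOpen hU hw
  obtain ⟨L, hL⟩ := (hfin.image List.length).bddAbove
  replace hL : ∀ z, μ z ≠ 0 → z.length ≤ L := fun z hz => hL ⟨z, hz, rfl⟩
  have hM : IsMarkovFamily (pker q μ) P := hmarkov
  set x := bprefix w m
  obtain ⟨t, ht⟩ := hM.exists_measure_forall_mem_ne_zero (pker_nonneg hq0 hq1 hμ0) (x := [])
    (S := longExtensions [] L) (by
      filter_upwards [hbnd []] with ω hω
      simpa [longExtensions_nil] using hω.1.eventually_gt_atTop L)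
  have hxt : P (x ++ t) {ω | ∀ n, ω n ∈ longExtensions x L} ≠ 0 := fun h0 =>
    ht (nonpos_iff_eq_zero.1 ((measure_forall_mem_longExtensions_le hq0 hq1 hμ0 hM hL x t).trans_eq
      (by rw [h0, mul_zero])))
  obtain ⟨n, hn, hpn⟩ := hgen [] (x ++ t)
  have hstart := measure_preimage_shiftPath_ne_zero_of_pn_ne_zero hq0 hq1 hμ0 hM
    (measurableSet_forall_mem _) hxt hn hpn.ne'
  refine (pos_iff_ne_zero.2 hstart).trans_le ?_
  calc P [] (shiftPath n ⁻¹' {ω | ∀ n, ω n ∈ longExtensions x L})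
      ≤ P [] (bnd ⁻¹' (Set.Iio m).pi fun i => {w i}) := by
        refine measure_mono_ae ?_
        filter_upwards [hbnd []] with ω hω hωF
        have hx := eq_of_eventually_take_eq (by simpa [x] using hω.2 m) hωF
        exact fun i hi => bprefix_eq_bprefix_iff.1 hx i hi
    _ = ν [] ((Set.Iio m).pi fun i => {w i}) := by
        rw [hν, Measure.map_apply hbnd_meas
          (MeasurableSet.pi (Set.to_countable _) fun _ _ => measurableSet_singleton _)]
    _ ≤ ν [] U := measure_mono hmU

/-- the support of the harmonic measure `ν_ε` is the whole of `∂I`: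
`ν_ε(U) > 0` for every nonempty open `U ⊆ ∂I`. -/
theorem harmonic_measure_full_support
    (q : ℝ) (hq0 : 0 < q) (hq1 : q < 1)
    (μ : Word → ℝ) (hμ0 : ∀ z, 0 ≤ μ z) (hμ1 : HasSum μ 1)
    (hfin : {z : Word | μ z ≠ 0}.Finite)
    (hgen : ∀ x y : Word, ∃ n : ℕ, 1 ≤ n ∧ 0 < pn q μ n x y)
    (P : Word → Measure (ℕ → Word)) (hP : ∀ x, IsProbabilityMeasure (P x))
    (hmarkov : ∀ (x : Word) (w : ℕ → Word), w 0 = x → ∀ n : ℕ,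
      P x {ω | ∀ i ≤ n, ω i = w i} =
        ENNReal.ofReal (∏ i ∈ Finset.range n, pker q μ (w i) (w (i + 1))))
    (bnd : (ℕ → Word) → (ℕ → Bool)) (hbnd_meas : Measurable bnd)
    (hbnd : ∀ x : Word, ∀ᵐ ω ∂(P x),
      Tendsto (fun n => (ω n).length) atTop atTop ∧
      ∀ m : ℕ, ∀ᶠ n in atTop, (ω n).take m = bprefix (bnd ω) m)
    (ν : Word → Measure (ℕ → Bool)) (hν : ∀ x, ν x = (P x).map bnd)
    :
    ∀ U : Set (ℕ → Bool), IsOpen U → U.Nonempty → 0 < ν [] U :=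
  harmonic_measure_full_support_general q hq0 hq1 μ hμ0 hfin hgen P hP hmarkov bnd hbnd_meas hbnd ν
    hν
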